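/- arXiv:1510.01464 — 3 statements merged into one kernel-verified Lean document; each statement's English description precedes it below -/
import Mathlib

section
/- Let σ ∈ C¹(Ω, Ω) be a measure-preserving reversibility of ż = F(z) on Ω ⊆ ℝⁿ. If there exist z ∈ Ω and t_z > 0 with σ(z) = φ(t_z, z) ≠ z, then the arc of orbit {φ(t, z) : t ∈ [0, t_z]} contains a point z₀ with div F(z₀) = 0. -/
/-!
Reversibility turns `σ z = φ t_z z` into `σ m = m` for the midpoint `m = φ (t_z / 2) z` of the
arc, and differentiating `φ t ∘ σ = σ ∘ φ (-t)` at `t = 0` gives `Dσ · F = -F ∘ σ`. Because `σ`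
preserves volume, `|det Dσ| = 1` almost everywhere, so for a test function `ψ` supported in `Ω`,
integration by parts against `ψ` and against `ψ ∘ σ`, together with the change of variables
`x ↦ σ x`, give `∫ ψ · (div F ∘ σ) = -∫ ψ · div F`. Hence `div F ∘ σ = -div F` on `Ω`, and
`div F m = 0`. Arguing weakly avoids any spatial derivative of the flow.
-/

open MeasureTheory Set Function

section ChangeOfVariables

variable {E G : Type*} [NormedAddCommGroup E] [NormedSpace ℝ E] [FiniteDimensional ℝ E]
  [MeasurableSpace E] [BorelSpace E] [NormedAddCommGroup G] [NormedSpace ℝ G]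
  (μ : Measure E) [μ.IsAddHaarMeasure] {s : Set E} {f : E → E} {f' : E → E →L[ℝ] E}

theorem ae_abs_det_fderivWithin_eq_one_of_measure_image_eq (hs : MeasurableSet s)
    (hf' : ∀ x ∈ s, HasFDerivWithinAt f (f' x) s x) (hinj : InjOn f s)
    (hmeas : ∀ A ⊆ s, MeasurableSet A → μ (f '' A) = μ A) :
    ∀ᵐ x ∂μ.restrict s, |(f' x).det| = 1 := by
  have hdet : AEMeasurable (fun x ↦ ENNReal.ofReal |(f' x).det|) (μ.restrict s) :=
    (ContinuousLinearMap.continuous_det.measurable.comp_aemeasurable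
      (aemeasurable_fderivWithin μ hs hf')).abs.ennreal_ofReal
  have h_eq : (fun x ↦ ENNReal.ofReal |(f' x).det|) =ᵐ[μ.restrict s] fun _ ↦ 1 := by
    refine ae_eq_of_forall_setLIntegral_eq_of_sigmaFinite₀ hdet aemeasurable_const
      fun t ht _ ↦ ?_
    have hts : t ∩ s ⊆ s := inter_subset_right
    rw [Measure.restrict_restrict ht,
      lintegral_abs_det_fderiv_eq_addHaar_image μ (ht.inter hs)
        (fun x hx ↦ (hf' x (hts hx)).mono hts) (hinj.mono hts),
      hmeas _ hts (ht.inter hs), setLIntegral_one]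
  filter_upwards [h_eq] with x hx
  simpa using hx

theorem setIntegral_comp_eq_of_measure_image_eq (hs : MeasurableSet s)
    (hf' : ∀ x ∈ s, HasFDerivWithinAt f (f' x) s x) (hinj : InjOn f s) (himage : f '' s = s)
    (hmeas : ∀ A ⊆ s, MeasurableSet A → μ (f '' A) = μ A) (g : E → G) :
    ∫ x in s, g (f x) ∂μ = ∫ x in s, g x ∂μ := by
  conv_rhs => rw [← himage, integral_image_eq_integral_abs_det_fderiv_smul μ hs hf' hinj g]
  refine integral_congr_ae ?_
  filter_upwards [ae_abs_det_fderivWithin_eq_one_of_measure_image_eq μ hs hf' hinj hmeas]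
    with x hx
  rw [hx, one_smul]

end ChangeOfVariables

theorem ContDiffOn.contDiff_of_tsupport_subset {E F : Type*} [NormedAddCommGroup E]
    [NormedSpace ℝ E] [NormedAddCommGroup F] [NormedSpace ℝ F] {n : WithTop ℕ∞} {f : E → F}
    {U : Set E} (hf : ContDiffOn ℝ n f U) (hU : IsOpen U) (hfU : tsupport f ⊆ U) :
    ContDiff ℝ n f := by
  refine contDiff_iff_contDiffAt.2 fun x ↦ ?_
  by_cases hx : x ∈ U
  · exact hf.contDiffAt (hU.mem_nhds hx)
  · exact contDiffAt_const.congr_of_eventuallyEq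
      (notMem_tsupport_iff_eventuallyEq.1 fun h ↦ hx (hfU h))

theorem MeasureTheory.Integrable.of_continuousOn_of_support_subset {X : Type*}
    [TopologicalSpace X] [T2Space X] [MeasurableSpace X] [OpensMeasurableSpace X] {μ : Measure X}
    [IsFiniteMeasureOnCompacts μ] {f : X → ℝ} {K : Set X} (hK : IsCompact K)
    (hf : ContinuousOn f K) (hfK : support f ⊆ K) : Integrable f μ :=
  (integrableOn_iff_integrable_of_support_subset hfK).1 (hf.integrableOn_compact hK)

theorem HasFDerivAt.apply_eq_neg_of_reverses_flow {E : Type*} [NormedAddCommGroup E]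
    [NormedSpace ℝ E] {φ : ℝ → E → E} {F σ : E → E} {σ' : E →L[ℝ] E} {w : E}
    (hσ : HasFDerivAt σ σ' w) (hφ0 : φ 0 w = w) (hw : HasDerivAt (fun t ↦ φ t w) (F w) 0)
    (hσw : HasDerivAt (fun t ↦ φ t (σ w)) (F (σ w)) 0)
    (hrev : ∀ t, φ t (σ w) = σ (φ (-t) w)) :
    σ' (F w) = -F (σ w) := by
  have hback : HasDerivAt (fun t ↦ φ (-t) w) (-F w) 0 := by
    have hw' : HasDerivAt (fun t ↦ φ t w) (F w) (-0) := by rwa [neg_zero]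
    simpa [Function.comp_def] using hw'.scomp 0 (hasDerivAt_neg 0)
  have hσback : HasDerivAt (fun t ↦ σ (φ (-t) w)) (σ' (-F w)) 0 :=
    (by simpa [hφ0] using hσ : HasFDerivAt σ σ' (φ (-0) w)).comp_hasDerivAt 0 hback
  rw [funext hrev] at hσw
  rw [hσw.unique hσback, map_neg, neg_neg]

theorem isFixedPt_flow_half_of_reverses {E : Type*} {φ : ℝ → E → E} {σ : E → E} {z : E} {T : ℝ}
    (hgroup : ∀ s t, φ (s + t) z = φ s (φ t z)) (hrev : ∀ t, φ t (σ z) = σ (φ (-t) z))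
    (hσz : σ z = φ T z) :
    IsFixedPt σ (φ (T / 2) z) := by
  have h := hrev (-(T / 2))
  rwa [neg_neg, hσz, ← hgroup, show -(T / 2) + T = T / 2 by ring, eq_comm] at h

section Divergence

variable {n : ℕ}

noncomputable def divergence (F : (Fin n → ℝ) → Fin n → ℝ) (x : Fin n → ℝ) : ℝ :=
  ∑ i, fderiv ℝ F x (Pi.single i 1) i

theorem ContDiffOn.continuousOn_divergence {Ω : Set (Fin n → ℝ)} {F : (Fin n → ℝ) → Fin n → ℝ}
    (hF : ContDiffOn ℝ 1 F Ω) (hΩ : IsOpen Ω) : ContinuousOn (divergence F) Ω :=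
  continuousOn_finsetSum _ fun i _ ↦ (continuous_apply i).comp_continuousOn
    ((hF.continuousOn_fderiv_of_isOpen hΩ le_rfl).clm_apply continuousOn_const)

theorem integral_mul_divergence_eq_neg {μ : Measure (Fin n → ℝ)} [μ.IsAddHaarMeasure]
    {Ω : Set (Fin n → ℝ)} (hΩ : IsOpen Ω) {F : (Fin n → ℝ) → Fin n → ℝ}
    (hF : ContDiffOn ℝ 1 F Ω) {η : (Fin n → ℝ) → ℝ} (hη : ContDiffOn ℝ 1 η Ω)
    (hη_supp : HasCompactSupport η) (hηΩ : tsupport η ⊆ Ω) :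
    ∫ x, η x * divergence F x ∂μ = -∫ x, fderiv ℝ η x (F x) ∂μ := by
  have hη' : ContDiff ℝ 1 η := hη.contDiff_of_tsupport_subset hΩ hηΩ
  have hFd : ∀ x ∈ Ω, HasFDerivAt F (fderiv ℝ F x) x := fun x hx ↦
    ((hF.differentiableOn one_ne_zero).differentiableAt (hΩ.mem_nhds hx)).hasFDerivAt
  have hKΩ : ∀ {g : (Fin n → ℝ) → ℝ}, ContinuousOn g Ω → support g ⊆ tsupport η →
      Integrable g μ := fun hg hgK ↦
    Integrable.of_continuousOn_of_support_subset hη_supp (hg.mono hηΩ) hgK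
  have hFc : ContinuousOn F Ω := hF.continuousOn
  have hηc : Continuous η := hη'.continuous
  have hDη : ContinuousOn (fderiv ℝ η) Ω := (hη'.continuous_fderiv one_ne_zero).continuousOn
  have hDF : ContinuousOn (fderiv ℝ F) Ω := hF.continuousOn_fderiv_of_isOpen hΩ le_rfl
  have hint₁ : ∀ i, Integrable (fun x ↦ η x * fderiv ℝ F x (Pi.single i 1) i) μ := fun i ↦
    hKΩ (by fun_prop) fun x hx ↦ subset_tsupport _ fun h ↦ hx (by simp [h])
  have hint₂ : ∀ i, Integrable (fun x ↦ fderiv ℝ η x (Pi.single i 1) * F x i) μ := fun i ↦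
    hKΩ (by fun_prop) fun x hx ↦ support_fderiv_subset ℝ fun h ↦ hx (by simp [h])
  have hint₃ : ∀ i, Integrable (fun x ↦ η x * F x i) μ := fun i ↦
    hKΩ (by fun_prop) fun x hx ↦ subset_tsupport _ fun h ↦ hx (by simp [h])
  have hparts : ∀ i, ∫ x, η x * fderiv ℝ F x (Pi.single i 1) i ∂μ =
      -∫ x, fderiv ℝ η x (Pi.single i 1) * F x i ∂μ := fun i ↦ by
    simpa using integral_bilinear_hasFDerivAt_right_eq_neg_left_of_integrable (μ := μ)
      (B := ContinuousLinearMap.mul ℝ ℝ) (g := fun x ↦ F x i) (v := Pi.single i 1)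
      (g' := fun x ↦ (ContinuousLinearMap.proj i).comp (fderiv ℝ F x))
      (by simpa using hint₂ i) (by simpa using hint₁ i) (by simpa using hint₃ i)
      (fun x _ ↦ (hη'.differentiable one_ne_zero x).hasFDerivAt)
      (fun x hx ↦ hasFDerivAt_pi'.1 (hFd x (hηΩ hx)) i)
  calc ∫ x, η x * divergence F x ∂μ
      = ∑ i, ∫ x, η x * fderiv ℝ F x (Pi.single i 1) i ∂μ := by
        simp only [divergence, Finset.mul_sum]
        exact integral_finsetSum _ fun i _ ↦ hint₁ i
    _ = -∑ i, ∫ x, fderiv ℝ η x (Pi.single i 1) * F x i ∂μ := by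
        simp only [hparts, Finset.sum_neg_distrib]
    _ = -∫ x, fderiv ℝ η x (F x) ∂μ := by
        rw [← integral_finsetSum _ fun i _ ↦ hint₂ i]
        congr! 3 with x
        conv_rhs => rw [pi_eq_sum_univ' (F x), map_sum]
        simp [mul_comm]

theorem integral_mul_divergence_comp_eq_neg {μ : Measure (Fin n → ℝ)} [μ.IsAddHaarMeasure]
    {Ω : Set (Fin n → ℝ)} (hΩ : IsOpen Ω) {F σ : (Fin n → ℝ) → Fin n → ℝ}
    (hF : ContDiffOn ℝ 1 F Ω) (hσ : ContDiffOn ℝ 1 σ Ω) (hmaps : MapsTo σ Ω Ω)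
    (hσinv : ∀ x ∈ Ω, σ (σ x) = x)
    (hmeas : ∀ A ⊆ Ω, MeasurableSet A → μ (σ '' A) = μ A)
    (hσF : ∀ x ∈ Ω, fderiv ℝ σ x (F x) = -F (σ x)) {ψ : (Fin n → ℝ) → ℝ}
    (hψ : ContDiff ℝ 1 ψ) (hψ_supp : HasCompactSupport ψ) (hψΩ : tsupport ψ ⊆ Ω) :
    ∫ x, ψ x * divergence F (σ x) ∂μ = -∫ x, ψ x * divergence F x ∂μ := by
  have hσd : ∀ x ∈ Ω, DifferentiableAt ℝ σ x := fun x hx ↦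
    (hσ.differentiableOn one_ne_zero).differentiableAt (hΩ.mem_nhds hx)
  have hcov : ∀ g : (Fin n → ℝ) → ℝ, ∫ x in Ω, g (σ x) ∂μ = ∫ x in Ω, g x ∂μ :=
    setIntegral_comp_eq_of_measure_image_eq μ hΩ.measurableSet
      (fun x hx ↦ (hσd x hx).hasFDerivAt.hasFDerivWithinAt) (LeftInvOn.injOn hσinv)
      (hmaps.image_subset.antisymm (LeftInvOn.surjOn hσinv hmaps)) hmeas
  have hout : ∀ {g : (Fin n → ℝ) → ℝ}, support g ⊆ Ω → ∫ x in Ω, g x ∂μ = ∫ x, g x ∂μ :=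
    fun hg ↦ setIntegral_eq_integral_of_forall_compl_eq_zero fun x hx ↦
      notMem_support.1 fun h ↦ hx (hg h)
  -- `σ` is arbitrary off `Ω`, so the pulled-back test function is cut off there.
  set χ := Ω.indicator (ψ ∘ σ)
  have hχ : ContDiffOn ℝ 1 χ Ω := (hψ.comp_contDiffOn hσ).congr fun x hx ↦ indicator_of_mem hx _
  have hK : IsCompact (σ '' tsupport ψ) := hψ_supp.image_of_continuousOn (hσ.continuousOn.mono hψΩ)
  have hχK : tsupport χ ⊆ σ '' tsupport ψ := by
    refine closure_minimal ?_ hK.isClosed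
    rw [support_indicator]
    rintro x ⟨hxΩ, hx⟩
    exact ⟨σ x, subset_tsupport _ hx, hσinv x hxΩ⟩
  have hχΩ : tsupport χ ⊆ Ω := hχK.trans (hmaps.mono_left hψΩ).image_subset
  have hDχ : ∀ x ∈ Ω, fderiv ℝ χ x (F x) = -fderiv ℝ ψ (σ x) (F (σ x)) := fun x hx ↦ by
    have hloc : χ =ᶠ[nhds x] ψ ∘ σ :=
      Filter.eventually_of_mem (hΩ.mem_nhds hx) fun y hy ↦ indicator_of_mem hy _
    rw [hloc.fderiv_eq, fderiv_comp x (hψ.differentiable one_ne_zero _) (hσd x hx),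
      ContinuousLinearMap.comp_apply, hσF x hx, map_neg]
  set d := divergence F
  calc ∫ x, ψ x * d (σ x) ∂μ
      = ∫ x in Ω, ψ (σ x) * d (σ (σ x)) ∂μ := by
        rw [hcov fun y ↦ ψ y * d (σ y), hout ((support_mul_subset_left _ _).trans
          ((subset_tsupport ψ).trans hψΩ))]
    _ = ∫ x, χ x * d x ∂μ := by
        rw [← hout ((support_mul_subset_left _ _).trans ((subset_tsupport χ).trans hχΩ))]
        refine setIntegral_congr_fun hΩ.measurableSet fun x hx ↦ ?_
        simp only [χ, indicator_of_mem hx, comp_apply, hσinv x hx]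
    _ = -∫ x, fderiv ℝ χ x (F x) ∂μ :=
        integral_mul_divergence_eq_neg hΩ hF hχ
          (hK.of_isClosed_subset (isClosed_tsupport χ) hχK) hχΩ
    _ = ∫ x in Ω, fderiv ℝ ψ (σ x) (F (σ x)) ∂μ := by
        rw [← hout fun x hx ↦ hχΩ (support_fderiv_subset ℝ fun h ↦ hx (by simp [h])),
          ← integral_neg]
        exact setIntegral_congr_fun hΩ.measurableSet fun x hx ↦ by simp [hDχ x hx]
    _ = -∫ x, ψ x * d x ∂μ := by
        rw [hcov fun y ↦ fderiv ℝ ψ y (F y), hout fun x hx ↦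
          hψΩ (support_fderiv_subset ℝ fun h ↦ hx (by simp [h])),
          integral_mul_divergence_eq_neg hΩ hF hψ.contDiffOn hψ_supp hψΩ, neg_neg]

theorem divergence_comp_eq_neg (μ : Measure (Fin n → ℝ)) [μ.IsAddHaarMeasure]
    {Ω : Set (Fin n → ℝ)} (hΩ : IsOpen Ω) {F σ : (Fin n → ℝ) → Fin n → ℝ}
    (hF : ContDiffOn ℝ 1 F Ω) (hσ : ContDiffOn ℝ 1 σ Ω) (hmaps : MapsTo σ Ω Ω)
    (hσinv : ∀ x ∈ Ω, σ (σ x) = x)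
    (hmeas : ∀ A ⊆ Ω, MeasurableSet A → μ (σ '' A) = μ A)
    (hσF : ∀ x ∈ Ω, fderiv ℝ σ x (F x) = -F (σ x)) {x : Fin n → ℝ} (hx : x ∈ Ω) :
    divergence F (σ x) = -divergence F x := by
  have hd : ContinuousOn (divergence F) Ω := hF.continuousOn_divergence hΩ
  have hdσ : ContinuousOn (fun x ↦ divergence F (σ x)) Ω := hd.comp hσ.continuousOn hmaps
  have hsum : ContinuousOn (fun x ↦ divergence F (σ x) + divergence F x) Ω := hdσ.add hd
  have hweak := hΩ.ae_eq_zero_of_integral_contDiff_smul_eq_zero (μ := μ)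
    (hsum.locallyIntegrableOn hΩ.measurableSet) fun ψ hψ hψ_supp hψΩ ↦ by
      have hint : ∀ {g : (Fin n → ℝ) → ℝ}, ContinuousOn g Ω →
          Integrable (fun x ↦ ψ x * g x) μ := fun hg ↦
        .of_continuousOn_of_support_subset hψ_supp
          ((hψ.continuous.continuousOn.mul hg).mono hψΩ)
          ((support_mul_subset_left _ _).trans (subset_tsupport ψ))
      simp only [smul_eq_mul, mul_add]
      rw [integral_add (hint hdσ) (hint hd), integral_mul_divergence_comp_eq_neg hΩ hF hσ hmaps
        hσinv hmeas hσF (hψ.of_le (by norm_num)) hψ_supp hψΩ, neg_add_cancel]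
  have h := Measure.eqOn_open_of_ae_eq (g := 0)
    ((ae_restrict_iff' hΩ.measurableSet).2 hweak) hΩ hsum continuousOn_const hx
  simp only [Pi.zero_apply] at h
  linarith

end Divergence

theorem arc_contains_zero_divergence_general {n : ℕ} (Ω : Set (Fin n → ℝ))
    (hΩ : IsOpen Ω)
    (F : (Fin n → ℝ) → (Fin n → ℝ)) (hF : ContDiffOn ℝ 1 F Ω)
    (φ : ℝ → (Fin n → ℝ) → (Fin n → ℝ))
    (hmem : ∀ (t : ℝ), ∀ z ∈ Ω, φ t z ∈ Ω)
    (hφ0 : ∀ z ∈ Ω, φ 0 z = z)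
    (hgroup : ∀ (s t : ℝ), ∀ z ∈ Ω, φ (s + t) z = φ s (φ t z))
    (hderiv : ∀ z ∈ Ω, ∀ t : ℝ, HasDerivAt (fun u => φ u z) (F (φ t z)) t)
    (σ : (Fin n → ℝ) → (Fin n → ℝ)) (hσC1 : ContDiffOn ℝ 1 σ Ω)
    (hmaps : Set.MapsTo σ Ω Ω) (hσinv : ∀ z ∈ Ω, σ (σ z) = z)
    (hrev : ∀ (t : ℝ), ∀ z ∈ Ω, φ t (σ z) = σ (φ (-t) z))
    (hmeas : ∀ A ⊆ Ω, MeasurableSet A → volume (σ '' A) = volume A)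
    (z : Fin n → ℝ) (hz : z ∈ Ω) (tz : ℝ) (htz : 0 < tz)
    (hσz : σ z = φ tz z) :
    ∃ t ∈ Set.Icc (0 : ℝ) tz,
      ∑ i : Fin n, fderiv ℝ F (φ t z) (Pi.single i 1) i = 0 := by
  have hσF : ∀ w ∈ Ω, fderiv ℝ σ w (F w) = -F (σ w) := fun w hw ↦
    ((hσC1.differentiableOn one_ne_zero).differentiableAt (hΩ.mem_nhds hw)).hasFDerivAt
      |>.apply_eq_neg_of_reverses_flow (hφ0 w hw) (by simpa [hφ0 w hw] using hderiv w hw 0)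
      (by simpa [hφ0 _ (hmaps hw)] using hderiv _ (hmaps hw) 0) fun t ↦ hrev t w hw
  have hfix : IsFixedPt σ (φ (tz / 2) z) :=
    isFixedPt_flow_half_of_reverses (fun s t ↦ hgroup s t z hz) (fun t ↦ hrev t z hz) hσz
  have hdiv := divergence_comp_eq_neg volume hΩ hF hσC1 hmaps hσinv hmeas hσF
    (hmem (tz / 2) z hz)
  rw [hfix.eq] at hdiv
  refine ⟨tz / 2, ⟨by linarith, by linarith⟩, ?_⟩
  change divergence F _ = 0
  linarith

/-- Theorem 1(i): if σ is a measure-preserving reversibility and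
σ(z) = φ(t_z, z) ≠ z with t_z > 0, then the arc of orbit from z to σ(z)
contains a zero-divergence point. -/
theorem arc_contains_zero_divergence {n : ℕ} (Ω : Set (Fin n → ℝ))
    (hΩ : IsOpen Ω) (hconn : IsConnected Ω)
    (F : (Fin n → ℝ) → (Fin n → ℝ)) (hF : ContDiffOn ℝ 1 F Ω)
    (φ : ℝ → (Fin n → ℝ) → (Fin n → ℝ))
    (hmem : ∀ (t : ℝ), ∀ z ∈ Ω, φ t z ∈ Ω)
    (hφ0 : ∀ z ∈ Ω, φ 0 z = z)
    (hgroup : ∀ (s t : ℝ), ∀ z ∈ Ω, φ (s + t) z = φ s (φ t z))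
    (hderiv : ∀ z ∈ Ω, ∀ t : ℝ, HasDerivAt (fun u => φ u z) (F (φ t z)) t)
    (σ : (Fin n → ℝ) → (Fin n → ℝ)) (hσC1 : ContDiffOn ℝ 1 σ Ω)
    (hmaps : Set.MapsTo σ Ω Ω) (hσinv : ∀ z ∈ Ω, σ (σ z) = z)
    (hrev : ∀ (t : ℝ), ∀ z ∈ Ω, φ t (σ z) = σ (φ (-t) z))
    (hmeas : ∀ A ⊆ Ω, MeasurableSet A → volume (σ '' A) = volume A)
    (z : Fin n → ℝ) (hz : z ∈ Ω) (tz : ℝ) (htz : 0 < tz)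
    (hσz : σ z = φ tz z) (hne : φ tz z ≠ z) :
    ∃ t ∈ Set.Icc (0 : ℝ) tz,
      ∑ i : Fin n, fderiv ℝ F (φ t z) (Pi.single i 1) i = 0 :=
  arc_contains_zero_divergence_general Ω hΩ F hF φ hmem hφ0 hgroup hderiv σ hσC1 hmaps hσinv hrev
    hmeas z hz tz htz hσz
end

section
/- Let σ be a mirror symmetry of ż = F(z) on ℝⁿ, i.e. the reflection across a hyperplane H which is a measure-preserving reversibility of the system. Then at every regular point z ∈ H (F(z) ≠ 0) one has div F(z) = 0; in particular the regular part of the symmetry hyperplane is contained in the zero-divergence set of F. -/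
/-!
Differentiating the reversibility `φ t (σ z) = σ (φ (-t) z)` at `t = 0` gives
`F ∘ σ = -R ∘ F` on `Ω`, where `R` is the linear part of `σ`, i.e. the reflection in the
direction hyperplane `uᗮ`. At a point `z` of `H` we have `σ z = z`, so differentiating once more in `z` yields
`DF(z) ∘ R = -R ∘ DF(z)`. Since `R` is an involution, `DF(z)` is conjugate to its own negative,
so its trace, which is `div F(z)`, vanishes.
-/

open scoped InnerProductSpace Topology

theorem LinearMap.trace_eq_zero_of_comp_involution_eq_neg {R M : Type*} [CommRing R]
    [NoZeroDivisors R] [CharZero R] [AddCommGroup M] [Module R M] [Module.Free R M]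
    [Module.Finite R M] {A S : M →ₗ[R] M} (hS : Function.Involutive S)
    (hAS : A ∘ₗ S = -(S ∘ₗ A)) : LinearMap.trace R M A = 0 := by
  have hSS : S ∘ₗ S = LinearMap.id := LinearMap.ext hS
  have h : LinearMap.trace R M A = -LinearMap.trace R M A :=
    calc LinearMap.trace R M A = LinearMap.trace R M ((A ∘ₗ S) ∘ₗ S) := by
          rw [LinearMap.comp_assoc, hSS, LinearMap.comp_id]
      _ = LinearMap.trace R M (S ∘ₗ (A ∘ₗ S)) := LinearMap.trace_comp_comm' _ _
      _ = -LinearMap.trace R M A := by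
          rw [hAS, LinearMap.comp_neg, ← LinearMap.comp_assoc, hSS, LinearMap.id_comp, map_neg]
  exact CharZero.eq_neg_self_iff.mp h

theorem EuclideanSpace.trace_eq_sum_apply_single {𝕜 ι : Type*} [RCLike 𝕜] [Fintype ι]
    [DecidableEq ι] (T : EuclideanSpace 𝕜 ι →ₗ[𝕜] EuclideanSpace 𝕜 ι) :
    LinearMap.trace 𝕜 _ T = ∑ i, T (EuclideanSpace.single i 1) i := by
  rw [T.trace_eq_sum_inner (EuclideanSpace.basisFun ι 𝕜)]
  simp [EuclideanSpace.inner_single_left]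

theorem reflection_orthogonalComplement_singleton_apply_of_norm_eq_one {E : Type*}
    [NormedAddCommGroup E] [InnerProductSpace ℝ E] {u : E} (hu : ‖u‖ = 1) (v : E) :
    (ℝ ∙ u)ᗮ.reflection v = v - (2 * ⟪v, u⟫_ℝ) • u := by
  rw [Submodule.reflection_orthogonal_apply, Submodule.reflection_singleton_apply, hu,
    real_inner_comm]
  simp only [neg_sub, two_smul]
  module

theorem apply_eq_neg_fderiv_apply_of_reversing {E : Type*} [NormedAddCommGroup E]
    [NormedSpace ℝ E] {φ : ℝ → E → E} {F σ : E → E} {L : E →L[ℝ] E} {w : E} (hφ0 : φ 0 w = w)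
    (hw : HasDerivAt (fun t => φ t w) (F w) 0)
    (hσw : HasDerivAt (fun t => φ t (σ w)) (F (σ w)) 0) (hσ : HasFDerivAt σ L w)
    (hrev : ∀ t, φ t (σ w) = σ (φ (-t) w)) : F (σ w) = -L (F w) := by
  have hback : HasDerivAt (fun t => φ (-t) w) (-F w) 0 := by
    simpa [Function.comp_def] using hw.scomp_of_eq 0 (hasDerivAt_neg 0) neg_zero.symm
  have hσ' : HasFDerivAt σ L (φ (-0) w) := by rwa [neg_zero, hφ0]
  have hσback : HasDerivAt (fun t => σ (φ (-t) w)) (L (-F w)) 0 := hσ'.comp_hasDerivAt 0 hback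
  rw [funext hrev] at hσw
  rw [hσw.unique hσback, map_neg]

theorem fderiv_comp_eq_comp_fderiv_of_intertwine {𝕜 E G : Type*} [NontriviallyNormedField 𝕜]
    [NormedAddCommGroup E] [NormedSpace 𝕜 E] [NormedAddCommGroup G] [NormedSpace 𝕜 G]
    {f : E → G} {σ : E → E} {L : E →L[𝕜] E} {M : G →L[𝕜] G} {z : E}
    (hf : DifferentiableAt 𝕜 f z) (hσ : HasFDerivAt σ L z) (hz : σ z = z)
    (h : f ∘ σ =ᶠ[𝓝 z] M ∘ f) : fderiv 𝕜 f z ∘L L = M ∘L fderiv 𝕜 f z := by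
  have hf' : HasFDerivAt f (fderiv 𝕜 f z) (σ z) := by rw [hz]; exact hf.hasFDerivAt
  exact (hf'.comp z hσ).unique ((M.hasFDerivAt.comp z hf.hasFDerivAt).congr_of_eventuallyEq h)

theorem mirror_symmetry_hyperplane_zero_divergence_general {n : ℕ}
    (Ω : Set (EuclideanSpace ℝ (Fin n))) (hΩ : IsOpen Ω)
    (F : EuclideanSpace ℝ (Fin n) → EuclideanSpace ℝ (Fin n))
    (hF : ContDiffOn ℝ 1 F Ω)
    (φ : ℝ → EuclideanSpace ℝ (Fin n) → EuclideanSpace ℝ (Fin n))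
    (hφ0 : ∀ z ∈ Ω, φ 0 z = z)
    (hderiv : ∀ z ∈ Ω, ∀ t : ℝ, HasDerivAt (fun u => φ u z) (F (φ t z)) t)
    -- the hyperplane H through p with unit normal u, and the reflection σ
    (p u : EuclideanSpace ℝ (Fin n)) (hu : ‖u‖ = 1)
    (H : Set (EuclideanSpace ℝ (Fin n)))
    (hH : H = {z | inner ℝ (z - p) u = (0 : ℝ)})
    (σ : EuclideanSpace ℝ (Fin n) → EuclideanSpace ℝ (Fin n))
    (hσ : ∀ z, σ z = z - (2 * (inner ℝ (z - p) u : ℝ)) • u)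
    (hΩinv : Set.MapsTo σ Ω Ω)
    (hrev : ∀ (t : ℝ), ∀ z ∈ Ω, φ t (σ z) = σ (φ (-t) z)) :
    ∀ z ∈ H ∩ Ω, F z ≠ 0 →
      ∑ i : Fin n, fderiv ℝ F z (EuclideanSpace.single i 1) i = 0 := by
  rintro z ⟨hzH, hzΩ⟩ -
  set R : EuclideanSpace ℝ (Fin n) →L[ℝ] EuclideanSpace ℝ (Fin n) := (ℝ ∙ u)ᗮ.reflection
  have hσR : σ = fun w => R (w - p) + p := funext fun w => by
    rw [hσ, ContinuousLinearEquiv.coe_coe, LinearIsometryEquiv.coe_toContinuousLinearEquiv,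
      reflection_orthogonalComplement_singleton_apply_of_norm_eq_one hu]
    abel
  have hσD : ∀ w, HasFDerivAt σ R w := fun w => hσR ▸
    ((R.hasFDerivAt.comp w ((hasFDerivAt_id w).sub_const p)).add_const p)
  have hσz : σ z = z := by
    subst hH
    rw [hσ, show inner ℝ (z - p) u = (0 : ℝ) from hzH]
    simp
  have hvel : ∀ w ∈ Ω, HasDerivAt (fun t => φ t w) (F w) 0 := fun w hw => by
    simpa only [hφ0 w hw] using hderiv w hw 0
  have hFσ : ∀ w ∈ Ω, F (σ w) = -R (F w) := fun w hw =>
    apply_eq_neg_fderiv_apply_of_reversing (hφ0 w hw) (hvel w hw) (hvel _ (hΩinv hw)) (hσD w)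
      (hrev · w hw)
  have hanti : fderiv ℝ F z ∘L R = (-R) ∘L fderiv ℝ F z :=
    fderiv_comp_eq_comp_fderiv_of_intertwine
      ((hF.differentiableOn one_ne_zero).differentiableAt (hΩ.mem_nhds hzΩ)) (hσD z) hσz
      (Filter.eventuallyEq_of_mem (hΩ.mem_nhds hzΩ) hFσ)
  rw [← ContinuousLinearMap.coe_coe, ← EuclideanSpace.trace_eq_sum_apply_single]
  refine LinearMap.trace_eq_zero_of_comp_involution_eq_neg (S := (R : _ →ₗ[ℝ] _)) ?_ ?_
  · exact Submodule.reflection_reflection _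
  · exact congrArg ContinuousLinearMap.toLinearMap hanti

/-- Corollary: if the reflection σ across a hyperplane H is a reversibility of
ż = F(z), then at every regular point of H the divergence of F vanishes; i.e.
the regular part of the symmetry hyperplane lies in the zero-divergence set. -/
theorem mirror_symmetry_hyperplane_zero_divergence {n : ℕ}
    (Ω : Set (EuclideanSpace ℝ (Fin n))) (hΩ : IsOpen Ω)
    (hconn : IsConnected Ω)
    (F : EuclideanSpace ℝ (Fin n) → EuclideanSpace ℝ (Fin n))
    (hF : ContDiffOn ℝ 1 F Ω)
    (φ : ℝ → EuclideanSpace ℝ (Fin n) → EuclideanSpace ℝ (Fin n))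
    (hmem : ∀ (t : ℝ), ∀ z ∈ Ω, φ t z ∈ Ω)
    (hφ0 : ∀ z ∈ Ω, φ 0 z = z)
    (hgroup : ∀ (s t : ℝ), ∀ z ∈ Ω, φ (s + t) z = φ s (φ t z))
    (hderiv : ∀ z ∈ Ω, ∀ t : ℝ, HasDerivAt (fun u => φ u z) (F (φ t z)) t)
    -- the hyperplane H through p with unit normal u, and the reflection σ
    (p u : EuclideanSpace ℝ (Fin n)) (hu : ‖u‖ = 1)
    (H : Set (EuclideanSpace ℝ (Fin n)))
    (hH : H = {z | inner ℝ (z - p) u = (0 : ℝ)})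
    (σ : EuclideanSpace ℝ (Fin n) → EuclideanSpace ℝ (Fin n))
    (hσ : ∀ z, σ z = z - (2 * (inner ℝ (z - p) u : ℝ)) • u)
    (hΩinv : Set.MapsTo σ Ω Ω)
    (hrev : ∀ (t : ℝ), ∀ z ∈ Ω, φ t (σ z) = σ (φ (-t) z)) :
    ∀ z ∈ H ∩ Ω, F z ≠ 0 →
      ∑ i : Fin n, fderiv ℝ F z (EuclideanSpace.single i 1) i = 0 :=
  mirror_symmetry_hyperplane_zero_divergence_general Ω hΩ F hF φ hφ0 hderiv p u hu H hH σ hσ hΩinv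
    hrev
end

section
/- Let F(x,y) = (r(x)y + s(x), −g(x) − f(x)y − h(x)y²) with r, s, f, g, h ∈ C¹(a,b), r(x) ≠ 0 on (a,b), and suppose r f − 2hs − s′r + sr′ ≡ 0. Define σ(x,y) = (x, −2s(x)/r(x) − y). Then σ is an involution and F(σ(x,y)) = −J_σ(x,y)·F(x,y) for all (x,y) ∈ (a,b) × ℝ; i.e. the system is σ-reversible. -/
/-!
Writing `σ(x, y) = (x, c(x) - y)` with `c = -2s/r`, the map `σ` reflects each vertical line
about the height `c(x)/2`, so it is an involution with Jacobian `[[1, 0], [c', -1]]`.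
For the `y`-quadratic field, `F(σ p) = -J_σ F(p)` is then a polynomial identity in `y` whose
coefficients are combinations of `r c + 2s` and `2f + 2hc + c'r`; the first vanishes by the
choice of `c`, and the second equals `(2/r)(rf - 2hs - s'r + sr')`.
-/

open ContinuousLinearMap

def verticalReflection (c : ℝ → ℝ) (p : ℝ × ℝ) : ℝ × ℝ := (p.1, c p.1 - p.2)

def yQuadraticField (r s f g h : ℝ → ℝ) (p : ℝ × ℝ) : ℝ × ℝ :=
  (r p.1 * p.2 + s p.1, -g p.1 - f p.1 * p.2 - h p.1 * p.2 ^ 2)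

theorem verticalReflection_involutive (c : ℝ → ℝ) :
    Function.Involutive (verticalReflection c) := by
  rintro ⟨x, y⟩
  simp [verticalReflection]

theorem hasFDerivAt_verticalReflection {c : ℝ → ℝ} {c' : ℝ} {p : ℝ × ℝ}
    (hc : HasDerivAt c c' p.1) :
    HasFDerivAt (verticalReflection c)
      ((fst ℝ ℝ ℝ).prod (c' • fst ℝ ℝ ℝ - snd ℝ ℝ ℝ)) p :=
  hasFDerivAt_fst.prodMk ((hc.comp_hasFDerivAt p hasFDerivAt_fst).sub hasFDerivAt_snd)

theorem yQuadraticField_verticalReflection {r s f g h c : ℝ → ℝ} {c' : ℝ} {p : ℝ × ℝ}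
    (hc : HasDerivAt c c' p.1) (hrc : r p.1 * c p.1 + 2 * s p.1 = 0)
    (hfhc : 2 * f p.1 + 2 * h p.1 * c p.1 + c' * r p.1 = 0) :
    yQuadraticField r s f g h (verticalReflection c p) =
      -(fderiv ℝ (verticalReflection c) p (yQuadraticField r s f g h p)) := by
  obtain ⟨x, y⟩ := p
  rw [(hasFDerivAt_verticalReflection hc).fderiv]
  simp only [yQuadraticField, verticalReflection, prod_apply, coe_fst', coe_snd', sub_apply,
    smul_apply, smul_eq_mul, Prod.neg_mk, Prod.mk.injEq]
  constructor
  · linear_combination hrc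
  · linear_combination (y - c x / 2) * hfhc + c' / 2 * hrc

theorem y_quadratic_reversible_general {a b : ℝ} (r s f g h s' r' : ℝ → ℝ)
    (hr : ∀ x ∈ Set.Ioo a b, HasDerivAt r (r' x) x)
    (hs : ∀ x ∈ Set.Ioo a b, HasDerivAt s (s' x) x)
    (hrne : ∀ x ∈ Set.Ioo a b, r x ≠ 0)
    (hcond : ∀ x ∈ Set.Ioo a b,
      r x * f x - 2 * h x * s x - s' x * r x + s x * r' x = 0)
    (F : ℝ × ℝ → ℝ × ℝ)
    (hFdef : ∀ p : ℝ × ℝ,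
      F p = (r p.1 * p.2 + s p.1, -g p.1 - f p.1 * p.2 - h p.1 * p.2 ^ 2))
    (σ : ℝ × ℝ → ℝ × ℝ)
    (hσ : ∀ p : ℝ × ℝ, σ p = (p.1, -(2 * s p.1 / r p.1) - p.2)) :
    (∀ p ∈ Set.Ioo a b ×ˢ (Set.univ : Set ℝ), σ (σ p) = p) ∧
    (∀ p ∈ Set.Ioo a b ×ˢ (Set.univ : Set ℝ),
      F (σ p) = -(fderiv ℝ σ p (F p))) := by
  have hσ_eq : σ = verticalReflection (fun x => -(2 * s x / r x)) := funext hσ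
  have hF_eq : F = yQuadraticField r s f g h := funext hFdef
  subst hσ_eq hF_eq
  refine ⟨fun p _ => verticalReflection_involutive _ p, ?_⟩
  rintro ⟨x, y⟩ ⟨hx, -⟩
  have hrx := hrne x hx
  have hc : HasDerivAt (fun t => -(2 * s t / r t))
      (-((2 * s' x * r x - 2 * s x * r' x) / r x ^ 2)) x :=
    (((hs x hx).const_mul 2).div (hr x hx) hrx).neg
  refine yQuadraticField_verticalReflection hc ?_ ?_
  · field_simp
    ring
  · field_simp
    linear_combination 2 * hcond x hx

/-- Theorem 2 (teoquadra): under condition rf − 2hs − s′r + sr′ ≡ 0 with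
r ≠ 0, the map σ(x,y) = (x, −2s(x)/r(x) − y) is an involution and the
y-quadratic system is σ-reversible: F(σ(p)) = −J_σ(p)·F(p). -/
theorem y_quadratic_reversible {a b : ℝ} (r s f g h s' r' : ℝ → ℝ)
    (hr : ∀ x ∈ Set.Ioo a b, HasDerivAt r (r' x) x)
    (hs : ∀ x ∈ Set.Ioo a b, HasDerivAt s (s' x) x)
    (hrC : ContDiffOn ℝ 1 r (Set.Ioo a b))
    (hsC : ContDiffOn ℝ 1 s (Set.Ioo a b))
    (hfC : ContDiffOn ℝ 1 f (Set.Ioo a b))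
    (hgC : ContDiffOn ℝ 1 g (Set.Ioo a b))
    (hhC : ContDiffOn ℝ 1 h (Set.Ioo a b))
    (hrne : ∀ x ∈ Set.Ioo a b, r x ≠ 0)
    (hcond : ∀ x ∈ Set.Ioo a b,
      r x * f x - 2 * h x * s x - s' x * r x + s x * r' x = 0)
    (F : ℝ × ℝ → ℝ × ℝ)
    (hFdef : ∀ p : ℝ × ℝ,
      F p = (r p.1 * p.2 + s p.1, -g p.1 - f p.1 * p.2 - h p.1 * p.2 ^ 2))
    (σ : ℝ × ℝ → ℝ × ℝ)
    (hσ : ∀ p : ℝ × ℝ, σ p = (p.1, -(2 * s p.1 / r p.1) - p.2)) :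
    (∀ p ∈ Set.Ioo a b ×ˢ (Set.univ : Set ℝ), σ (σ p) = p) ∧
    (∀ p ∈ Set.Ioo a b ×ˢ (Set.univ : Set ℝ),
      F (σ p) = -(fderiv ℝ σ p (F p))) :=
  y_quadratic_reversible_general r s f g h s' r' hr hs hrne hcond F hFdef σ hσ
end
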